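/- For an index (k_1,…,k_r) with k_1+⋯+k_r even, one has I_2(k_1,…,k_r) + {}_1I_1(k_1,…,k_r) + I_2(k_r,…,k_1) = σ_2(I_0(k_1,…,k_r)) in 𝓘. -/

import Mathlib

/-- Indices: finite sequences of positive integers (modeled as lists of naturals). -/
abbrev Idx := List ℕ

/-- The ℚ-vector space 𝓘 on the set of indices. -/
abbrev Ical := Idx →₀ ℚ

/-- Auxiliary harmonic product on reversed lists (cons = append at the end). -/
noncomputable def harmAux : Idx → Idx → Ical
  | [], l => Finsupp.single l 1
  | a :: k, [] => Finsupp.single (a :: k) 1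
  | a :: k, b :: l =>
      Finsupp.mapDomain (a :: ·) (harmAux k (b :: l)) +
      Finsupp.mapDomain (b :: ·) (harmAux (a :: k) l) +
      Finsupp.mapDomain ((a + b) :: ·) (harmAux k l)
termination_by k l => k.length + l.length

/-- The harmonic (stuffle) product of two indices. -/
noncomputable def harm (k l : Idx) : Ical :=
  Finsupp.mapDomain List.reverse (harmAux k.reverse l.reverse)

/-- Bilinear extension of the harmonic product to 𝓘. -/
noncomputable def harmF (x y : Ical) : Ical :=
  x.sum fun k c => y.sum fun l d => (c * d) • harm k l

/-- The map σₙ on indices. -/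
noncomputable def sigma : ℕ → Idx → Ical
  | n, [] => if n = 0 then Finsupp.single [] 1 else 0
  | n, k :: ks =>
      ∑ a ∈ Finset.range (n + 1),
        ((k + a - 1).choose a : ℚ) •
          Finsupp.mapDomain (fun t => (k + a) :: t) (sigma (n - a) ks)

/-- Linear extension of σₙ to 𝓘. -/
noncomputable def sigmaL (n : ℕ) (x : Ical) : Ical :=
  x.sum fun k c => c • sigma n k

/-- The map ₘIₙ on indices. -/
noncomputable def mI (m n : ℕ) (ks : Idx) : Ical :=
  ∑ i ∈ Finset.range (ks.length + 1),
    ((-1 : ℚ)) ^ ((ks.drop i).sum) •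
      harmF (sigma m (ks.take i)) (sigma n ((ks.drop i).reverse))

/-- The index shuffle product ⧢̃ of two indices. -/
noncomputable def sh : Idx → Idx → Ical
  | [], l => Finsupp.single l 1
  | a :: k, [] => Finsupp.single (a :: k) 1
  | a :: k, b :: l =>
      Finsupp.mapDomain (a :: ·) (sh k (b :: l)) +
      Finsupp.mapDomain (b :: ·) (sh (a :: k) l)
termination_by k l => k.length + l.length

/-- The multiple zeta value of an index. -/
noncomputable def mzv (ks : List ℕ) : ℝ :=
  ∑' f : {f : Fin ks.length → ℕ // StrictMono f ∧ ∀ i, 0 < f i},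
    ∏ i, (1 / (f.1 i : ℝ) ^ ks.get i)

/-!
The maps `σ_n` are compatible with the harmonic product:
`σ_n(𝐤 * 𝐥) = ∑_{i+j=n} σ_i(𝐤) * σ_j(𝐥)`. This is proved by induction along the recursion of
`*`; the only arithmetic input is the Vandermonde identity
`∑_{p+q=s} C(a+p-1,p) C(b+q-1,q) = C(a+b+s-1,s)` for the entry `a + b` created by stuffing.
Since `harm` is defined by recursion on reversed indices, the induction is run on `harmAux` and
transported along reversal, which commutes with `σ_n`.

Applying `σ_n` termwise to `I_0` thus gives `σ_n(I_0(𝐤)) = ∑_{i+j=n} ᵢI_j(𝐤)`. For `n = 2` it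
remains to see that `₂I_0(𝐤) = (-1)^{wt 𝐤} I_2(𝐤 reversed)`, and the sign is `1` for even weight.
-/

open Finset

section Antidiagonal

variable {M : Type*} [AddCommMonoid M]

theorem Finset.Nat.sum_antidiagonal_assoc (f : ℕ → ℕ → ℕ → M) (n : ℕ) :
    ∑ x ∈ antidiagonal n, ∑ y ∈ antidiagonal x.1, f y.1 y.2 x.2 =
      ∑ x ∈ antidiagonal n, ∑ y ∈ antidiagonal x.2, f x.1 y.1 y.2 := by
  rw [sum_sigma', sum_sigma']
  refine sum_nbij' (fun ⟨(_, k), (i, j)⟩ ↦ ⟨(i, j + k), (j, k)⟩)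
    (fun ⟨(i, _), (j, k)⟩ ↦ ⟨(i + j, k), (i, j)⟩) ?_ ?_ ?_ ?_ ?_ <;>
    aesop (add simp [add_assoc])

theorem Finset.Nat.sum_antidiagonal_left_comm (f : ℕ → ℕ → ℕ → M) (n : ℕ) :
    ∑ x ∈ antidiagonal n, ∑ y ∈ antidiagonal x.2, f x.1 y.1 y.2 =
      ∑ x ∈ antidiagonal n, ∑ y ∈ antidiagonal x.2, f y.1 x.1 y.2 := by
  rw [sum_sigma', sum_sigma']
  refine sum_nbij' (fun ⟨(i, _), (j, k)⟩ ↦ ⟨(j, i + k), (i, k)⟩)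
    (fun ⟨(i, _), (j, k)⟩ ↦ ⟨(j, i + k), (i, k)⟩) ?_ ?_ ?_ ?_ ?_ <;>
    aesop (add simp [add_assoc, add_left_comm])

theorem Finset.Nat.sum_antidiagonal_add_add_add_comm (f : ℕ → ℕ → ℕ → ℕ → M) (n : ℕ) :
    ∑ x ∈ antidiagonal n, ∑ y ∈ antidiagonal x.1, ∑ z ∈ antidiagonal x.2,
        f y.1 y.2 z.1 z.2 =
      ∑ x ∈ antidiagonal n, ∑ y ∈ antidiagonal x.1, ∑ z ∈ antidiagonal x.2,
        f y.1 z.1 y.2 z.2 := by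
  simp_rw [← sum_product']
  rw [sum_sigma', sum_sigma']
  refine sum_nbij' (fun ⟨_, (p, i), (q, j)⟩ ↦ ⟨(p + q, i + j), (p, q), (i, j)⟩)
    (fun ⟨_, (p, i), (q, j)⟩ ↦ ⟨(p + q, i + j), (p, q), (i, j)⟩) ?_ ?_ ?_ ?_ ?_ <;>
    aesop (add simp [add_assoc, add_left_comm, add_comm])

end Antidiagonal

theorem Nat.multichoose_add (a b n : ℕ) :
    (a + b).multichoose n =
      ∑ x ∈ antidiagonal n, a.multichoose x.1 * b.multichoose x.2 := by
  have coeff_invOneSubPow (d k : ℕ) :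
      PowerSeries.coeff k (PowerSeries.invOneSubPow ℤ d).val = d.multichoose k := by
    cases d with
    | zero => cases k <;> simp [PowerSeries.invOneSubPow_zero, PowerSeries.coeff_one]
    | succ d =>
      rw [PowerSeries.invOneSubPow_val_succ_eq_mk_add_choose, PowerSeries.coeff_mk,
        Nat.multichoose_eq, Nat.add_right_comm, Nat.add_sub_cancel, Nat.choose_symm_add]
  have h := congrArg (PowerSeries.coeff n ∘ Units.val) (PowerSeries.invOneSubPow_add ℤ a b)
  simp only [Function.comp_apply, Units.val_mul, PowerSeries.coeff_mul, coeff_invOneSubPow] at h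
  exact_mod_cast h

noncomputable def consL (c : ℕ) : Ical →ₗ[ℚ] Ical := Finsupp.lmapDomain ℚ ℚ (c :: ·)

noncomputable def snocL (c : ℕ) : Ical →ₗ[ℚ] Ical := Finsupp.lmapDomain ℚ ℚ (· ++ [c])

noncomputable def revL : Ical →ₗ[ℚ] Ical := Finsupp.lmapDomain ℚ ℚ List.reverse

noncomputable def sigmaLin (n : ℕ) : Ical →ₗ[ℚ] Ical := Finsupp.linearCombination ℚ (sigma n)

noncomputable def harmAuxLin : Ical →ₗ[ℚ] Ical →ₗ[ℚ] Ical :=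
  Finsupp.linearCombination ℚ fun k ↦ Finsupp.linearCombination ℚ (harmAux k)

noncomputable def harmLin : Ical →ₗ[ℚ] Ical →ₗ[ℚ] Ical :=
  Finsupp.linearCombination ℚ fun k ↦ Finsupp.linearCombination ℚ (harm k)

@[simp] lemma consL_single (c : ℕ) (t : Idx) (d : ℚ) :
    consL c (Finsupp.single t d) = Finsupp.single (c :: t) d := by
  simp [consL]

@[simp] lemma snocL_single (c : ℕ) (t : Idx) (d : ℚ) :
    snocL c (Finsupp.single t d) = Finsupp.single (t ++ [c]) d := by
  simp [snocL]

@[simp] lemma revL_single (t : Idx) (d : ℚ) :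
    revL (Finsupp.single t d) = Finsupp.single t.reverse d := by
  simp [revL]

@[simp] lemma sigmaLin_single (n : ℕ) (t : Idx) (d : ℚ) :
    sigmaLin n (Finsupp.single t d) = d • sigma n t := by
  simp [sigmaLin]

@[simp] lemma harmAuxLin_single (k l : Idx) (c d : ℚ) :
    harmAuxLin (Finsupp.single k c) (Finsupp.single l d) = c • d • harmAux k l := by
  simp [harmAuxLin]

@[simp] lemma harmLin_single (k l : Idx) (c d : ℚ) :
    harmLin (Finsupp.single k c) (Finsupp.single l d) = c • d • harm k l := by
  simp [harmLin]

lemma sigmaL_eq_sigmaLin (n : ℕ) (x : Ical) : sigmaL n x = sigmaLin n x := rfl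

lemma harmF_eq_harmLin (x y : Ical) : harmF x y = harmLin x y := by
  simp [harmF, harmLin, Finsupp.linearCombination_apply, Finsupp.sum, smul_sum, mul_smul]

/-- The recursion defining `sigma n (a :: t)`, as an operator on sequences `u m = σ_m(t)`;
note `a.multichoose p = (a + p - 1).choose p`. -/
noncomputable def sigmaCons (a : ℕ) (u : ℕ → Ical) (n : ℕ) : Ical :=
  ∑ x ∈ antidiagonal n, (a.multichoose x.1 : ℚ) • consL (a + x.1) (u x.2)

lemma sigma_nil (n : ℕ) : sigma n [] = if n = 0 then Finsupp.single [] 1 else 0 := by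
  rw [sigma]

lemma sigma_cons (n a : ℕ) (t : Idx) : sigma n (a :: t) = sigmaCons a (sigma · t) n := by
  rw [sigma, sigmaCons, Nat.sum_antidiagonal_eq_sum_range_succ
    (fun p m ↦ (a.multichoose p : ℚ) • consL (a + p) (sigma m t))]
  simp [consL, Nat.multichoose_eq]

@[simp] lemma sigma_zero (t : Idx) : sigma 0 t = Finsupp.single t 1 := by
  induction t with
  | nil => simp [sigma_nil]
  | cons a t ih => simp [sigma_cons, sigmaCons, ih]

lemma sigmaCons_add (a b : ℕ) (w : ℕ → Ical) (n : ℕ) :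
    sigmaCons (a + b) w n =
      ∑ x ∈ antidiagonal n, ∑ y ∈ antidiagonal x.1,
        ((a.multichoose y.1 : ℚ) * b.multichoose y.2) • consL (a + y.1 + (b + y.2)) (w x.2) := by
  refine sum_congr rfl fun x _ ↦ ?_
  rw [Nat.multichoose_add, Nat.cast_sum, sum_smul]
  refine sum_congr rfl fun y hy ↦ ?_
  rw [HasAntidiagonal.mem_antidiagonal] at hy
  rw [← hy, Nat.add_add_add_comm, Nat.cast_mul]

lemma sigmaLin_consL (n a : ℕ) (x : Ical) :
    sigmaLin n (consL a x) = sigmaCons a (sigmaLin · x) n := by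
  induction x using Finsupp.induction_linear with
  | zero => simp [sigmaCons]
  | add x y hx hy => simp [hx, hy, sigmaCons, smul_add, sum_add_distrib]
  | single t d => simp [sigma_cons, sigmaCons, smul_sum, smul_comm d]

lemma consL_snocL (a c : ℕ) (x : Ical) : consL a (snocL c x) = snocL c (consL a x) := by
  induction x using Finsupp.induction_linear with
  | zero => simp
  | add x y hx hy => simp [hx, hy]
  | single t d => simp

lemma revL_consL (c : ℕ) (x : Ical) : revL (consL c x) = snocL c (revL x) := by
  induction x using Finsupp.induction_linear with
  | zero => simp
  | add x y hx hy => simp [hx, hy]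
  | single t d => simp

lemma sigma_singleton (n c : ℕ) :
    sigma n [c] = (c.multichoose n : ℚ) • Finsupp.single [c + n] 1 := by
  rw [sigma_cons, sigmaCons, sum_eq_single (n, 0)]
  · simp
  · rintro ⟨p, m⟩ hx hne
    have hm : m ≠ 0 := by rintro rfl; simp_all
    simp [sigma_nil, hm]
  · simp

lemma sigma_append_singleton (t : Idx) (n c : ℕ) :
    sigma n (t ++ [c]) =
      ∑ x ∈ antidiagonal n, (c.multichoose x.1 : ℚ) • snocL (c + x.1) (sigma x.2 t) := by
  induction t generalizing n with
  | nil =>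
    rw [List.nil_append, sigma_singleton, sum_eq_single (n, 0)]
    · simp
    · rintro ⟨p, m⟩ hx hne
      have hm : m ≠ 0 := by rintro rfl; simp_all
      simp [sigma_nil, hm]
    · simp
  | cons a t ih =>
    simp only [List.cons_append, sigma_cons, sigmaCons, ih, map_sum, map_smul, smul_sum,
      consL_snocL, smul_comm (a.multichoose _ : ℚ)]
    exact Nat.sum_antidiagonal_left_comm
      (fun p q m ↦ (c.multichoose q : ℚ) • (a.multichoose p : ℚ) •
        snocL (c + q) (consL (a + p) (sigma m t))) n

lemma sigma_reverse (n : ℕ) (t : Idx) : sigma n t.reverse = revL (sigma n t) := by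
  induction t generalizing n with
  | nil => by_cases hn : n = 0 <;> simp [sigma_nil, hn]
  | cons a t ih => simp [sigma_append_singleton, sigma_cons, sigmaCons, ih, revL_consL]

lemma sigmaLin_revL (n : ℕ) (x : Ical) : sigmaLin n (revL x) = revL (sigmaLin n x) := by
  induction x using Finsupp.induction_linear with
  | zero => simp
  | add x y hx hy => simp [hx, hy]
  | single t d => simp [sigma_reverse]

lemma harmAux_nil_left (l : Idx) : harmAux [] l = Finsupp.single l 1 := by
  rw [harmAux]

lemma harmAux_nil_right (k : Idx) : harmAux k [] = Finsupp.single k 1 := by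
  cases k <;> rw [harmAux]

lemma harmAux_cons_cons (a b : ℕ) (k l : Idx) :
    harmAux (a :: k) (b :: l) =
      consL a (harmAux k (b :: l)) + consL b (harmAux (a :: k) l) +
        consL (a + b) (harmAux k l) := by
  rw [harmAux]
  simp [consL]

lemma harmAux_comm (k l : Idx) : harmAux k l = harmAux l k := by
  match k, l with
  | [], l => rw [harmAux_nil_left, harmAux_nil_right]
  | a :: k, [] => rw [harmAux_nil_left, harmAux_nil_right]
  | a :: k, b :: l =>
    rw [harmAux_cons_cons, harmAux_cons_cons, harmAux_comm k (b :: l),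
      harmAux_comm (a :: k) l, harmAux_comm k l, Nat.add_comm a b]
    abel
termination_by k.length + l.length

lemma harmAuxLin_single_nil_left (x : Ical) : harmAuxLin (Finsupp.single [] 1) x = x := by
  induction x using Finsupp.induction_linear with
  | zero => simp
  | add x y hx hy => simp [hx, hy]
  | single l d => simp [harmAux_nil_left]

lemma harmAuxLin_single_nil_right (x : Ical) : harmAuxLin x (Finsupp.single [] 1) = x := by
  induction x using Finsupp.induction_linear with
  | zero => simp
  | add x y hx hy => simp [hx, hy]
  | single k c => simp [harmAux_nil_right]

lemma harmAuxLin_consL_consL (a b : ℕ) (x y : Ical) :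
    harmAuxLin (consL a x) (consL b y) =
      consL a (harmAuxLin x (consL b y)) + consL b (harmAuxLin (consL a x) y) +
        consL (a + b) (harmAuxLin x y) := by
  induction x using Finsupp.induction_linear with
  | zero => simp
  | add x x' hx hx' => simp only [map_add, LinearMap.add_apply, hx, hx']; abel
  | single k c =>
    induction y using Finsupp.induction_linear with
    | zero => simp
    | add y y' hy hy' => simp only [map_add, hy, hy']; abel
    | single l d => simp [harmAux_cons_cons, smul_add]

lemma harmAuxLin_sigmaCons_sigmaCons (a b : ℕ) (u v : ℕ → Ical) (i j : ℕ) :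
    harmAuxLin (sigmaCons a u i) (sigmaCons b v j) =
      ∑ y ∈ antidiagonal i, ∑ z ∈ antidiagonal j,
        ((a.multichoose y.1 : ℚ) • consL (a + y.1)
            (harmAuxLin (u y.2) ((b.multichoose z.1 : ℚ) • consL (b + z.1) (v z.2))) +
          (b.multichoose z.1 : ℚ) • consL (b + z.1)
            (harmAuxLin ((a.multichoose y.1 : ℚ) • consL (a + y.1) (u y.2)) (v z.2)) +
          ((a.multichoose y.1 : ℚ) * b.multichoose z.1) • consL (a + y.1 + (b + z.1))
            (harmAuxLin (u y.2) (v z.2))) := by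
  simp only [sigmaCons, map_sum, LinearMap.coe_sum, Finset.sum_apply, map_smul,
    LinearMap.smul_apply, harmAuxLin_consL_consL]
  rw [sum_comm]
  refine sum_congr rfl fun y _ ↦ ?_
  rw [smul_sum]
  refine sum_congr rfl fun z _ ↦ ?_
  module

noncomputable def harmAuxConv (u v : ℕ → Ical) (n : ℕ) : Ical :=
  ∑ x ∈ antidiagonal n, harmAuxLin (u x.1) (v x.2)

lemma harmAuxConv_sigma_nil_left (v : ℕ → Ical) (n : ℕ) :
    harmAuxConv (sigma · []) v n = v n := by
  rw [harmAuxConv, sum_eq_single (0, n)]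
  · simp [harmAuxLin_single_nil_left]
  · rintro ⟨p, m⟩ hx hne
    have hp : p ≠ 0 := by rintro rfl; simp_all
    simp [sigma_nil, hp]
  · simp

lemma harmAuxConv_sigma_nil_right (u : ℕ → Ical) (n : ℕ) :
    harmAuxConv u (sigma · []) n = u n := by
  rw [harmAuxConv, sum_eq_single (n, 0)]
  · simp [harmAuxLin_single_nil_right]
  · rintro ⟨p, m⟩ hx hne
    have hm : m ≠ 0 := by rintro rfl; simp_all
    simp [sigma_nil, hm]
  · simp

lemma harmAuxConv_sigmaCons (a b : ℕ) (u v : ℕ → Ical) (n : ℕ) :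
    harmAuxConv (sigmaCons a u) (sigmaCons b v) n =
      sigmaCons a (harmAuxConv u (sigmaCons b v)) n +
        sigmaCons b (harmAuxConv (sigmaCons a u) v) n +
          sigmaCons (a + b) (harmAuxConv u v) n := by
  let A (p : ℕ) : ℚ := a.multichoose p
  let B (q : ℕ) : ℚ := b.multichoose q
  have first : ∑ x ∈ antidiagonal n, ∑ y ∈ antidiagonal x.1, ∑ z ∈ antidiagonal x.2,
      A y.1 • consL (a + y.1) (harmAuxLin (u y.2) (B z.1 • consL (b + z.1) (v z.2))) =
        sigmaCons a (harmAuxConv u (sigmaCons b v)) n := by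
    simp only [sigmaCons, harmAuxConv, map_sum, smul_sum]
    exact Nat.sum_antidiagonal_assoc (fun p i m ↦ ∑ z ∈ antidiagonal m,
      A p • consL (a + p) (harmAuxLin (u i) (B z.1 • consL (b + z.1) (v z.2)))) n
  have second : ∑ x ∈ antidiagonal n, ∑ y ∈ antidiagonal x.1, ∑ z ∈ antidiagonal x.2,
      B z.1 • consL (b + z.1) (harmAuxLin (A y.1 • consL (a + y.1) (u y.2)) (v z.2)) =
        sigmaCons b (harmAuxConv (sigmaCons a u) v) n := by
    simp only [sigmaCons, harmAuxConv, map_sum, LinearMap.coe_sum, Finset.sum_apply, smul_sum]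
    simp only [sum_comm (s := antidiagonal (Prod.fst _))]
    exact Nat.sum_antidiagonal_left_comm (fun m q j ↦ ∑ y ∈ antidiagonal m,
      B q • consL (b + q) (harmAuxLin (A y.1 • consL (a + y.1) (u y.2)) (v j))) n
  have third : ∑ x ∈ antidiagonal n, ∑ y ∈ antidiagonal x.1, ∑ z ∈ antidiagonal x.2,
      (A y.1 * B z.1) • consL (a + y.1 + (b + z.1)) (harmAuxLin (u y.2) (v z.2)) =
        sigmaCons (a + b) (harmAuxConv u v) n := by
    simp only [sigmaCons_add, harmAuxConv, map_sum, smul_sum]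
    exact Nat.sum_antidiagonal_add_add_add_comm (fun p i q j ↦
      (A p * B q) • consL (a + p + (b + q)) (harmAuxLin (u i) (v j))) n
  rw [← first, ← second, ← third, harmAuxConv]
  simp only [harmAuxLin_sigmaCons_sigmaCons, sum_add_distrib, A, B]

theorem sigmaLin_harmAux (n : ℕ) (k l : Idx) :
    sigmaLin n (harmAux k l) = harmAuxConv (sigma · k) (sigma · l) n := by
  match k, l with
  | [], l => rw [harmAux_nil_left, harmAuxConv_sigma_nil_left, sigmaLin_single, one_smul]
  | a :: k, [] =>
    rw [harmAux_nil_right, harmAuxConv_sigma_nil_right, sigmaLin_single, one_smul]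
  | a :: k, b :: l =>
    have hk : (sigma · (a :: k)) = sigmaCons a (sigma · k) := funext fun m ↦ sigma_cons m a k
    have hl : (sigma · (b :: l)) = sigmaCons b (sigma · l) := funext fun m ↦ sigma_cons m b l
    have ih₁ : (sigmaLin · (harmAux k (b :: l))) =
        harmAuxConv (sigma · k) (sigma · (b :: l)) :=
      funext fun m ↦ sigmaLin_harmAux m k (b :: l)
    have ih₂ : (sigmaLin · (harmAux (a :: k) l)) =
        harmAuxConv (sigma · (a :: k)) (sigma · l) :=
      funext fun m ↦ sigmaLin_harmAux m (a :: k) l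
    have ih₃ : (sigmaLin · (harmAux k l)) = harmAuxConv (sigma · k) (sigma · l) :=
      funext fun m ↦ sigmaLin_harmAux m k l
    rw [harmAux_cons_cons, map_add, map_add, sigmaLin_consL, sigmaLin_consL, sigmaLin_consL,
      ih₁, ih₂, ih₃, hk, hl, harmAuxConv_sigmaCons]
termination_by k.length + l.length

lemma harm_comm (k l : Idx) : harm k l = harm l k := by
  rw [harm, harm, harmAux_comm]

lemma harmF_comm (x y : Ical) : harmF x y = harmF y x := by
  rw [harmF_eq_harmLin, harmF_eq_harmLin]
  induction x using Finsupp.induction_linear with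
  | zero => simp
  | add x x' hx hx' => simp [hx, hx']
  | single k c =>
    induction y using Finsupp.induction_linear with
    | zero => simp
    | add y y' hy hy' => simp [hy, hy']
    | single l d => rw [harmLin_single, harmLin_single, harm_comm, smul_comm]

lemma harmF_eq_revL_harmAuxLin (x y : Ical) :
    harmF x y = revL (harmAuxLin (revL x) (revL y)) := by
  rw [harmF_eq_harmLin]
  induction x using Finsupp.induction_linear with
  | zero => simp
  | add x x' hx hx' => simp [hx, hx']
  | single k c =>
    induction y using Finsupp.induction_linear with
    | zero => simp
    | add y y' hy hy' => simp only [map_add, hy, hy']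
    | single l d => simp [harm, revL]

theorem sigmaLin_harm (n : ℕ) (k l : Idx) :
    sigmaLin n (harm k l) = ∑ x ∈ antidiagonal n, harmF (sigma x.1 k) (sigma x.2 l) := by
  have harm_eq : harm k l = revL (harmAux k.reverse l.reverse) := by simp [harm, revL]
  simp only [harm_eq, sigmaLin_revL, sigmaLin_harmAux, harmAuxConv, map_sum, sigma_reverse,
    harmF_eq_revL_harmAuxLin]

lemma mI_reverse (m n : ℕ) (ks : Idx) :
    mI m n ks.reverse = (-1 : ℚ) ^ ks.sum • mI n m ks := by
  rw [mI, mI, List.length_reverse, ← sum_range_reflect, smul_sum]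
  refine sum_congr rfl fun i hi ↦ ?_
  have hi : i ≤ ks.length := Nat.lt_succ_iff.mp (mem_range.mp hi)
  have hidx : ks.length - (ks.length + 1 - 1 - i) = i := by omega
  rw [List.take_reverse, List.drop_reverse, hidx, List.reverse_reverse, List.sum_reverse,
    harmF_comm, smul_smul, ← pow_add, ← List.sum_take_add_sum_drop ks i, add_assoc,
    pow_add, ← two_mul, pow_mul, neg_one_sq, one_pow, mul_one]

theorem sigmaL_mI_zero_zero (n : ℕ) (ks : Idx) :
    sigmaL n (mI 0 0 ks) = ∑ x ∈ antidiagonal n, mI x.1 x.2 ks := by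
  simp only [sigmaL_eq_sigmaLin, mI, map_sum, map_smul, sigma_zero, harmF_eq_harmLin,
    harmLin_single, one_smul, sigmaLin_harm, smul_sum]
  rw [sum_comm]

theorem mI_sum_eq_sigma2_I0_general (ks : Idx) (hev : Even ks.sum) :
    mI 0 2 ks + mI 1 1 ks + mI 0 2 ks.reverse = sigmaL 2 (mI 0 0 ks) := by
  rw [mI_reverse, hev.neg_one_pow, one_smul, sigmaL_mI_zero_zero, Nat.sum_antidiagonal_succ,
    Nat.sum_antidiagonal_succ, Nat.antidiagonal_zero, sum_singleton, add_assoc]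

/-- For an index of even weight:
I₂(k₁,…,k_r) + ₁I₁(k₁,…,k_r) + I₂(k_r,…,k₁) = σ₂(I₀(k₁,…,k_r)). -/
theorem mI_sum_eq_sigma2_I0 (ks : Idx) (hks : ∀ x ∈ ks, 0 < x) (hev : Even ks.sum) :
    mI 0 2 ks + mI 1 1 ks + mI 0 2 ks.reverse = sigmaL 2 (mI 0 0 ks) :=
  mI_sum_eq_sigma2_I0_general ks hev
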